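/- (Correctness of the FTMCFE-IP scheme.) Define, for each i ∈ B, the ciphertext components C¹ᵢ = g^{hₗ·sᵢ}·g₀^{xᵢ}, C²ᵢ = (g^{hₗ}·g₁^{wᵢ})^{tᵢ}, C³ᵢ = (g₁·g₂^{γ^τ})^{wᵢ}, C⁴ᵢ = ĝ₁^{wᵢ}, C⁵ᵢ = g₂^{γ^τ·tᵢ}, and the partial functional key components SK¹ᵢ = ĝ₀^{sᵢ·yᵢ}·ĝ^{tᵢ·h_y}, SK²ᵢ = (ĝ^{h_y}·ĝ₁^{β})^{tᵢ}, SK³ᵢ = g₁^{β·tᵢ}, SK⁴ᵢ = ĝ^{h_y·wᵢ}, SK⁵ᵢ = g₂^{β̄·tᵢ}. If β̄ = γ^τ·β, then ∏_{i∈B} [ e(C¹ᵢ, ĝ₀^{yᵢ}) · e(C²ᵢ, ĝ^{h_y}) · e(SK³ᵢ, C⁴ᵢ) · e(C⁵ᵢ, SK⁴ᵢ) · e(SK⁵ᵢ, C⁴ᵢ) ] · ( ∏_{i∈B} [ e(g^{hₗ}, SK¹ᵢ) · e(C³ᵢ, SK²ᵢ) ] )⁻¹ = e(g₀, ĝ₀)^{∑_{i∈B}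 xᵢ·yᵢ}. -/

import Mathlib

/-!
Expanding every pairing by bilinearity, client `i`'s numerator becomes
`e(g₀, ĝ₀)^{xᵢ yᵢ} · Mᵢ · e(g₂, ĝ₁)^{β̄ tᵢ wᵢ}` and its denominator `Mᵢ · e(g₂, ĝ₁)^{γ^τ β tᵢ wᵢ}`,
where the mask `Mᵢ` collects the pairings carrying the secret key `sᵢ`, the masking key `tᵢ` and the
randomness `wᵢ`. Since `β̄ = γ^τ β`, each client's quotient is `e(g₀, ĝ₀)^{xᵢ yᵢ}`, and multiplying over
the online clients turns the exponents into the inner product `∑ xᵢ yᵢ`.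
-/

theorem zpow_finset_sum {M ι : Type*} [CommGroup M] (b : M) (s : Finset ι) (f : ι → ℤ) :
    b ^ (∑ i ∈ s, f i) = ∏ i ∈ s, b ^ f i := by
  induction s using Finset.cons_induction with
  | empty => simp
  | cons a s ha ih => rw [Finset.sum_cons, Finset.prod_cons, zpow_add, ih]

section Pairing

variable {G Ĝ Gₜ : Type*} [CommGroup G] [CommGroup Ĝ] [CommGroup Gₜ]

theorem MonoidHom.map_zpow_zpow₂ (e : G →* Ĝ →* Gₜ) (a : G) (b : Ĝ) (m n : ℤ) :
    e (a ^ m) (b ^ n) = e a b ^ (m * n) := by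
  rw [map_zpow, map_zpow, MonoidHom.zpow_apply, ← zpow_mul, mul_comm]

namespace FTMCFE_IP

variable (e : G →* Ĝ →* Gₜ) (g g₀ g₁ g₂ : G) (ĝ ĝ₀ ĝ₁ : Ĝ) (hₗ h_y k β βbar s t w x y : ℤ)

/-- The mask `Mᵢ`, with `k` in the role of `γ^τ`. -/
def mask : Gₜ :=
  e g ĝ₀ ^ (hₗ * s * y) * e g ĝ ^ (hₗ * t * h_y) * e g₁ ĝ ^ (w * t * h_y) *
    e g₁ ĝ₁ ^ (β * t * w) * e g₂ ĝ ^ (k * t * h_y * w)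

theorem numerator_eq_mask :
    e (g ^ (hₗ * s) * g₀ ^ x) (ĝ₀ ^ y) * e ((g ^ hₗ * g₁ ^ w) ^ t) (ĝ ^ h_y) *
        e (g₁ ^ (β * t)) (ĝ₁ ^ w) * e (g₂ ^ (k * t)) (ĝ ^ (h_y * w)) *
        e (g₂ ^ (βbar * t)) (ĝ₁ ^ w) =
      e g₀ ĝ₀ ^ (x * y) * mask e g g₁ g₂ ĝ ĝ₀ ĝ₁ hₗ h_y k β s t w y *
        e g₂ ĝ₁ ^ (βbar * t * w) := by
  simp only [mask, map_mul, MonoidHom.mul_apply, mul_zpow, ← zpow_mul, MonoidHom.map_zpow_zpow₂]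
  simp only [mul_comm, mul_left_comm, mul_assoc]

theorem denominator_eq_mask :
    e (g ^ hₗ) (ĝ₀ ^ (s * y) * ĝ ^ (t * h_y)) * e ((g₁ * g₂ ^ k) ^ w) ((ĝ ^ h_y * ĝ₁ ^ β) ^ t) =
      mask e g g₁ g₂ ĝ ĝ₀ ĝ₁ hₗ h_y k β s t w y * e g₂ ĝ₁ ^ (k * β * t * w) := by
  simp only [mask, map_mul, MonoidHom.mul_apply, mul_zpow, ← zpow_mul, MonoidHom.map_zpow_zpow₂]
  simp only [mul_comm, mul_left_comm, mul_assoc]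

theorem client_quotient_eq (hβ : βbar = k * β) :
    (e (g ^ (hₗ * s) * g₀ ^ x) (ĝ₀ ^ y) * e ((g ^ hₗ * g₁ ^ w) ^ t) (ĝ ^ h_y) *
        e (g₁ ^ (β * t)) (ĝ₁ ^ w) * e (g₂ ^ (k * t)) (ĝ ^ (h_y * w)) *
        e (g₂ ^ (βbar * t)) (ĝ₁ ^ w)) *
      (e (g ^ hₗ) (ĝ₀ ^ (s * y) * ĝ ^ (t * h_y)) *
        e ((g₁ * g₂ ^ k) ^ w) ((ĝ ^ h_y * ĝ₁ ^ β) ^ t))⁻¹ =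
      e g₀ ĝ₀ ^ (x * y) := by
  rw [numerator_eq_mask, denominator_eq_mask, hβ, mul_inv_eq_iff_eq_mul, mul_assoc]

end FTMCFE_IP

end Pairing

/-- Correctness of the FTMCFE-IP scheme. -/
theorem FTMCFE_IP_correctness {G Ghat GT : Type*} [CommGroup G] [CommGroup Ghat] [CommGroup GT]
    (e : G →* Ghat →* GT) (g g₀ g₁ g₂ : G) (ghat ghat₀ ghat₁ : Ghat)
    {ι : Type*} (B : Finset ι) (s t w x y : ι → ℤ)
    (hl hy γ β βbar : ℤ) (τ : ℕ) (hβ : βbar = γ ^ τ * β) :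
    (∏ i ∈ B,
        (e (g ^ (hl * s i) * g₀ ^ (x i)) (ghat₀ ^ (y i)) *
          e ((g ^ hl * g₁ ^ (w i)) ^ (t i)) (ghat ^ hy) *
          e (g₁ ^ (β * t i)) (ghat₁ ^ (w i)) *
          e (g₂ ^ (γ ^ τ * t i)) (ghat ^ (hy * w i)) *
          e (g₂ ^ (βbar * t i)) (ghat₁ ^ (w i)))) *
      (∏ i ∈ B,
        (e (g ^ hl) (ghat₀ ^ (s i * y i) * ghat ^ (t i * hy)) *
          e ((g₁ * g₂ ^ (γ ^ τ)) ^ (w i)) ((ghat ^ hy * ghat₁ ^ β) ^ (t i))))⁻¹ =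
      e g₀ ghat₀ ^ (∑ i ∈ B, x i * y i) := by
  rw [← Finset.prod_inv_distrib, ← Finset.prod_mul_distrib, zpow_finset_sum]
  exact Finset.prod_congr rfl fun i _ =>
    FTMCFE_IP.client_quotient_eq e g g₀ g₁ g₂ ghat ghat₀ ghat₁ hl hy (γ ^ τ) β βbar
      (s i) (t i) (w i) (x i) (y i) hβ
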